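/- arXiv:2008.00080 — 3 statements merged into one kernel-verified Lean document; each statement's English description precedes it below -/
import Mathlib

section
/- Let d ≥ 1, σ ∈ (0,1), μ ∈ [1/(4d), 1/(2d)), and 0 ≤ m ≤ σ·m₀(μ). Then the tilted transfer operator satisfies |Â_μ^{(m)}(k)| ≥ c·(m₀(μ) + |k|)² for all k ∈ [−π,π]^d, where Â_μ^{(m)}(k) = 1 − 2dμ·D̂^{(m)}(k), with a constant c > 0 depending only on d and σ. -/
/-!
Since `μ(Ω + 2(cosh m₀ − 1)) = 1`, the real part of `Â_μ^{(m)}(k) = 1 − 2dμ D̂^{(m)}(k)` is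
`2μ (cosh m₀ − cosh m) + 2μ ∑ⱼ (1 − cos kⱼ) + 2μ (cosh m − 1)(1 − cos k₁)`.
The first term is at least `μ (1 − σ) m₀²` because `m ≤ σ m₀`, the second is at least
`(4μ/π²) |k|²` by Jordan's inequality on `[−π, π]`, and the third is nonnegative; finally
`μ ≥ 1/(4d)` and `(m₀ + |k|)² ≤ 2 (m₀² + |k|²)`.
-/

open Real

/-- Fourier transform of the exponentially tilted nearest-neighbour step distribution:
`D̂^{(m)}(k) = (i/d) sinh m sin k₁ + (1/d) cosh m cos k₁ + (1/d) ∑_{j≥2} cos k_j`. -/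
noncomputable def DhatTilt (d : ℕ) [NeZero d] (m : ℝ) (k : Fin d → ℝ) : ℂ :=
  Complex.I * ((Real.sinh m / d : ℝ) : ℂ) * ((Real.sin (k 0) : ℝ) : ℂ)
    + ((Real.cosh m / d * Real.cos (k 0) : ℝ) : ℂ)
    + (((1 / d : ℝ) * ∑ j ∈ Finset.univ.filter (fun j => j ≠ 0), Real.cos (k j) : ℝ) : ℂ)

open Finset

lemma mul_sq_le_cosh_sub_cosh {σ m₀ m : ℝ} (hσ : σ ≤ 1) (hm₀ : 0 ≤ m₀) (hm : 0 ≤ m)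
    (hmσ : m ≤ σ * m₀) : (1 - σ) / 2 * m₀ ^ 2 ≤ cosh m₀ - cosh m := by
  have hgap : (1 - σ) * m₀ / 2 ≤ (m₀ - m) / 2 := by linarith
  have hgap_nonneg : 0 ≤ (1 - σ) * m₀ / 2 := by have := mul_nonneg (sub_nonneg.2 hσ) hm₀; linarith
  have h_sum : m₀ / 2 ≤ sinh ((m₀ + m) / 2) :=
    (by linarith : m₀ / 2 ≤ (m₀ + m) / 2).trans (self_le_sinh_iff.2 (by linarith))
  have h_diff : (1 - σ) * m₀ / 2 ≤ sinh ((m₀ - m) / 2) :=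
    hgap.trans (self_le_sinh_iff.2 (hgap_nonneg.trans hgap))
  have h_prod : cosh m₀ - cosh m = 2 * (sinh ((m₀ + m) / 2) * sinh ((m₀ - m) / 2)) := by
    have ha := cosh_add ((m₀ + m) / 2) ((m₀ - m) / 2)
    have hb := cosh_sub ((m₀ + m) / 2) ((m₀ - m) / 2)
    rw [show (m₀ + m) / 2 + (m₀ - m) / 2 = m₀ by ring] at ha
    rw [show (m₀ + m) / 2 - (m₀ - m) / 2 = m by ring] at hb
    linarith
  rw [h_prod]
  nlinarith [mul_le_mul h_sum h_diff hgap_nonneg ((by positivity : (0 : ℝ) ≤ m₀ / 2).trans h_sum)]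

lemma sum_cos_le_card_sub {ι : Type*} [Fintype ι] {k : ι → ℝ} (hk : ∀ j, |k j| ≤ π) :
    ∑ j, cos (k j) ≤ Fintype.card ι - 2 / π ^ 2 * ∑ j, k j ^ 2 :=
  calc ∑ j, cos (k j) ≤ ∑ j, (1 - 2 / π ^ 2 * k j ^ 2) :=
        sum_le_sum fun j _ => cos_le_one_sub_mul_cos_sq (hk j)
    _ = Fintype.card ι - 2 / π ^ 2 * ∑ j, k j ^ 2 := by
        rw [sum_sub_distrib, ← mul_sum]; simp

section DhatTilt

variable {d : ℕ} [NeZero d]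

lemma natCast_mul_re_DhatTilt (m : ℝ) (k : Fin d → ℝ) :
    d * (DhatTilt d m k).re = (cosh m - 1) * cos (k 0) + ∑ j, cos (k j) := by
  have hd : (d : ℝ) ≠ 0 := Nat.cast_ne_zero.2 (NeZero.ne d)
  have h_split : ∑ j, cos (k j) = cos (k 0) + ∑ j ∈ univ.filter (· ≠ 0), cos (k j) := by
    rw [filter_ne', add_sum_erase univ (fun j => cos (k j)) (mem_univ 0)]
  rw [h_split]
  simp [DhatTilt, Complex.mul_re, Complex.cos_ofReal_re]
  field_simp
  ring

lemma natCast_mul_re_DhatTilt_le {k : Fin d → ℝ} (m : ℝ) (hk : ∀ j, |k j| ≤ π) :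
    d * (DhatTilt d m k).re ≤ cosh m - 1 + d - 2 / π ^ 2 * ∑ j, k j ^ 2 := by
  have h_sum := sum_cos_le_card_sub hk
  rw [Fintype.card_fin] at h_sum
  have h_tilt : (cosh m - 1) * cos (k 0) ≤ cosh m - 1 :=
    mul_le_of_le_one_right (sub_nonneg.2 (one_le_cosh m)) (cos_le_one _)
  rw [natCast_mul_re_DhatTilt]
  linarith

lemma le_re_one_sub_mul_DhatTilt {μ m₀ m : ℝ} {k : Fin d → ℝ} (hμ : 0 < μ)
    (hcosh : cosh m₀ = 1 + (1 - 2 * d * μ) / (2 * μ)) (hk : ∀ j, |k j| ≤ π) :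
    2 * μ * (cosh m₀ - cosh m + 2 / π ^ 2 * ∑ j, k j ^ 2) ≤ (1 - 2 * d * μ * DhatTilt d m k).re := by
  have h_one : (1 : ℝ) = 2 * μ * (cosh m₀ - 1 + d) := by
    rw [hcosh]; field_simp; ring
  have h_re : (1 - 2 * d * μ * DhatTilt d m k).re = 1 - 2 * μ * (d * (DhatTilt d m k).re) := by
    simp [Complex.mul_re]; ring
  have h_le := mul_le_mul_of_nonneg_left (natCast_mul_re_DhatTilt_le m hk)
    (by positivity : (0 : ℝ) ≤ 2 * μ)
  rw [h_re]
  linarith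

end DhatTilt

/-- Massive infrared bound for the tilted transfer operator: for `σ ∈ (0,1)`,
`μ ∈ [1/(4d), 1/(2d))`, `0 ≤ m ≤ σ m₀(μ)` and `k ∈ [−π,π]^d`,
`|Â_μ^{(m)}(k)| = |1 − 2dμ D̂^{(m)}(k)| ≥ c (m₀(μ) + |k|)²`, with `c > 0`
depending only on `d` and `σ`, where `cosh m₀(μ) = 1 + (1 − 2dμ)/(2μ)`. -/
theorem tilted_transfer_lower_bound (d : ℕ) [NeZero d] (σ : ℝ) (hσ : σ ∈ Set.Ioo (0:ℝ) 1) :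
    ∃ c > (0:ℝ), ∀ μ : ℝ, 1 / (4 * d) ≤ μ → μ < 1 / (2 * d) →
      ∀ m₀ : ℝ, 0 ≤ m₀ → Real.cosh m₀ = 1 + (1 - 2 * d * μ) / (2 * μ) →
      ∀ m : ℝ, 0 ≤ m → m ≤ σ * m₀ →
      ∀ k : Fin d → ℝ, (∀ j, |k j| ≤ π) →
        c * (m₀ + Real.sqrt (∑ j, (k j) ^ 2)) ^ 2
          ≤ ‖1 - 2 * d * μ * DhatTilt d m k‖ := by
  have hd : (0 : ℝ) < d := Nat.cast_pos.2 (Nat.pos_of_neZero d)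
  set c₀ := min ((1 - σ) / 2) (2 / π ^ 2)
  have hc₀ : 0 < c₀ := lt_min (by linarith [hσ.2]) (by positivity)
  refine ⟨c₀ / (4 * d), by positivity, fun μ hμ _ m₀ hm₀ hcosh m hm hmσ k hk => ?_⟩
  have hμ₀ : 0 < μ := (by positivity : (0 : ℝ) < 1 / (4 * d)).trans_le hμ
  set S := ∑ j, k j ^ 2
  have hS : 0 ≤ S := sum_nonneg fun j _ => sq_nonneg _
  have h_gap := mul_sq_le_cosh_sub_cosh hσ.2.le hm₀ hm hmσ
  have h_re := le_re_one_sub_mul_DhatTilt (m := m) hμ₀ hcosh hk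
  have h_sq : (m₀ + √S) ^ 2 ≤ 2 * (m₀ ^ 2 + S) := by
    nlinarith [sq_nonneg (m₀ - √S), sq_sqrt hS]
  have h_c₀ : c₀ * (m₀ ^ 2 + S) ≤ (1 - σ) / 2 * m₀ ^ 2 + 2 / π ^ 2 * S := by
    nlinarith [min_le_left ((1 - σ) / 2) (2 / π ^ 2), min_le_right ((1 - σ) / 2) (2 / π ^ 2),
      sq_nonneg m₀]
  have h_μ : c₀ / (4 * d) ≤ μ * c₀ :=
    calc c₀ / (4 * d) = 1 / (4 * d) * c₀ := by ring
      _ ≤ μ * c₀ := by gcongr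
  calc c₀ / (4 * d) * (m₀ + √S) ^ 2 ≤ μ * c₀ * (2 * (m₀ ^ 2 + S)) := by gcongr
    _ = 2 * μ * (c₀ * (m₀ ^ 2 + S)) := by ring
    _ ≤ 2 * μ * (cosh m₀ - cosh m + 2 / π ^ 2 * S) := by gcongr; linarith
    _ ≤ ‖1 - 2 * d * μ * DhatTilt d m k‖ := h_re.trans (Complex.re_le_norm _)
end

section
/- For the weakly self-avoiding walk on the torus 𝕋_r^d with β ∈ (0,1), the susceptibility χ^𝕋(z) = ∑_{x} G_z^𝕋(x) is finite for every z ≥ 0: explicitly, χ^𝕋(z) ≤ ∑_{n=0}^∞ (2dz)^n (1−β)^{N_n(N_n−1)/2} < ∞, where N_n = ⌈n/r^d⌉. -/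
open scoped ENNReal

/-- The weakly self-avoiding walk interaction weight
`∏_{0 ≤ s < t ≤ n} (1 + β U_{st}(ω))`. -/
noncomputable def Kint {V : Type*} [DecidableEq V] (β : ℝ) (n : ℕ)
    (ω : Fin (n + 1) → V) : ℝ :=
  ∏ p ∈ Finset.univ.filter (fun p : Fin (n + 1) × Fin (n + 1) => p.1 < p.2),
    (1 + β * (if ω p.1 = ω p.2 then (-1 : ℝ) else 0))

/-- `ω` is an `n`-step nearest-neighbour walk on the torus `(ℤ/rℤ)^d` started at `0`. -/
def IsTWalk (d r n : ℕ) (ω : Fin (n + 1) → Fin d → ZMod r) : Prop :=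
  ω 0 = 0 ∧ ∀ i : Fin n, ∃ e : Fin d → ℤ, (∑ j, |e j|) = 1 ∧
    ω i.succ = ω i.castSucc + fun j => (e j : ZMod r)

/-- The weakly self-avoiding walk two-point function on the torus `(ℤ/rℤ)^d`. -/
noncomputable def wsawGT (d r : ℕ) (β z : ℝ) (x : Fin d → ZMod r) : ℝ≥0∞ :=
  ∑' p : (Σ n : ℕ,
      {ω : Fin (n + 1) → Fin d → ZMod r // IsTWalk d r n ω ∧ ω (Fin.last n) = x}),
    ENNReal.ofReal (z ^ p.1 * Kint β p.1 p.2.1)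

/-- `N_n = ⌈n / r^d⌉`: by pigeonhole, some torus vertex is visited at least `N_n`
times by an `n`-step torus walk. -/
noncomputable def pigeonN (d r n : ℕ) : ℕ := ⌈(n : ℝ) / (r ^ d : ℝ)⌉₊

/-! ### Auxiliary lemmas -/

lemma Kint_factor_nonneg {β : ℝ} (hβ1 : β ≤ 1) (c : Prop) [Decidable c] :
    0 ≤ 1 + β * (if c then (-1:ℝ) else 0) := by
  split <;> simp <;> linarith

lemma Kint_factor_le_one {β : ℝ} (hβ0 : 0 ≤ β) (c : Prop) [Decidable c] :
    1 + β * (if c then (-1:ℝ) else 0) ≤ 1 := by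
  split <;> simp <;> linarith

lemma Kint_le_pow {V : Type*} [DecidableEq V] [Fintype V] {β : ℝ} (hβ0 : 0 ≤ β) (hβ1 : β < 1)
    {n N : ℕ} (hN : (Fintype.card V) * (N - 1) < n + 1)
    (ω : Fin (n + 1) → V) : Kint β n ω ≤ (1 - β) ^ N.choose 2 := by
  classical
  obtain ⟨v, -, hv⟩ := Finset.exists_lt_card_fiber_of_mul_lt_card_of_maps_to
      (s := (Finset.univ : Finset (Fin (n+1)))) (t := (Finset.univ : Finset V))
      (f := ω) (n := N - 1) (fun a _ => Finset.mem_univ _)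
      (by simpa [Finset.card_univ] using hN)
  set fib := Finset.filter (fun x => ω x = v) Finset.univ with hfib
  have hNle : N ≤ fib.card := by omega
  set P := Finset.univ.filter (fun p : Fin (n + 1) × Fin (n + 1) => p.1 < p.2) with hP
  set S := P.filter (fun p => ω p.1 = v ∧ ω p.2 = v) with hS
  have hsub : S ⊆ P := Finset.filter_subset _ _
  have hcard : N.choose 2 ≤ S.card := by
    have h1 : N.choose 2 ≤ fib.card.choose 2 := Nat.choose_le_choose _ hNle
    have h2 : (fib.powersetCard 2).card ≤ S.card := by
      apply Finset.card_le_card_of_surjOn (fun p => {p.1, p.2})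
      intro t ht
      rw [Finset.mem_coe, Finset.mem_powersetCard] at ht
      obtain ⟨hts, htc⟩ := ht
      obtain ⟨a, b, hab, rfl⟩ := Finset.card_eq_two.mp htc
      have ha : ω a = v := by
        have := hts (by simp : a ∈ ({a, b} : Finset _))
        simpa [hfib] using this
      have hb : ω b = v := by
        have := hts (by simp : b ∈ ({a, b} : Finset _))
        simpa [hfib] using this
      rcases lt_or_gt_of_ne hab with h | h
      · exact ⟨(a, b), by simp [hS, hP, h, ha, hb], rfl⟩
      · exact ⟨(b, a), by simp [hS, hP, h, ha, hb], by simp [Finset.pair_comm]⟩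
    calc N.choose 2 ≤ fib.card.choose 2 := h1
      _ = (fib.powersetCard 2).card := (Finset.card_powersetCard _ _).symm
      _ ≤ S.card := h2
  have hSprod : ∏ p ∈ S, (1 + β * (if ω p.1 = ω p.2 then (-1 : ℝ) else 0))
      = (1 - β) ^ S.card := by
    rw [Finset.prod_congr rfl (fun p hp => ?_), Finset.prod_const]
    simp only [hS, Finset.mem_filter] at hp
    rw [if_pos (hp.2.1.trans hp.2.2.symm)]
    ring
  have key : Kint β n ω ≤ (1 - β) ^ S.card := by
    rw [Kint, ← hP, ← Finset.prod_sdiff hsub, ← hSprod]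
    have h1 : ∏ p ∈ P \ S, (1 + β * (if ω p.1 = ω p.2 then (-1 : ℝ) else 0)) ≤ 1 :=
      Finset.prod_le_one (fun p _ => Kint_factor_nonneg hβ1.le _)
        (fun p _ => Kint_factor_le_one hβ0 _)
    have h2 : 0 ≤ ∏ p ∈ S, (1 + β * (if ω p.1 = ω p.2 then (-1 : ℝ) else 0)) :=
      Finset.prod_nonneg fun p _ => Kint_factor_nonneg hβ1.le _
    nlinarith
  exact key.trans (pow_le_pow_of_le_one (by linarith) (by linarith) hcard)

/-- The set of possible single steps of a torus walk. -/
def stepSet (d r : ℕ) : Finset (Fin d → ZMod r) :=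
  Finset.image (fun jb : Fin d × Bool =>
    fun k => if k = jb.1 then (if jb.2 then (1 : ZMod r) else -1) else 0) Finset.univ

lemma stepSet_card (d r : ℕ) : (stepSet d r).card ≤ 2 * d := by
  calc (stepSet d r).card ≤ (Finset.univ : Finset (Fin d × Bool)).card :=
        Finset.card_image_le
    _ = 2 * d := by simp [Finset.card_univ, mul_comm]

lemma mem_stepSet {d r : ℕ} {e : Fin d → ℤ} (he : (∑ j, |e j|) = 1) :
    (fun j => (e j : ZMod r)) ∈ stepSet d r := by
  have hex : ∃ j0, e j0 ≠ 0 := by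
    by_contra hc
    push_neg at hc
    simp [hc] at he
  obtain ⟨j0, hj0⟩ := hex
  have h1 : ∑ k ∈ Finset.univ.erase j0, |e k| + |e j0| = 1 := by
    rw [Finset.sum_erase_add _ _ (Finset.mem_univ j0)]; exact he
  have habs : 1 ≤ |e j0| := Int.one_le_abs hj0
  have hrest : ∑ k ∈ Finset.univ.erase j0, |e k| = 0 := by
    have h0 : 0 ≤ ∑ k ∈ Finset.univ.erase j0, |e k| :=
      Finset.sum_nonneg fun k _ => abs_nonneg _
    omega
  have hzero : ∀ k, k ≠ j0 → e k = 0 := by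
    intro k hk
    have := (Finset.sum_eq_zero_iff_of_nonneg
      (fun k _ => abs_nonneg (e k))).mp hrest k (Finset.mem_erase.mpr ⟨hk, Finset.mem_univ _⟩)
    exact abs_eq_zero.mp this
  have habs1 : |e j0| = 1 := by omega
  rcases (abs_eq (by norm_num : (0:ℤ) ≤ 1)).mp habs1 with h | h
  · refine Finset.mem_image.mpr ⟨(j0, true), Finset.mem_univ _, ?_⟩
    funext k
    by_cases hk : k = j0
    · subst hk; simp [h]
    · simp [hk, hzero k hk]
  · refine Finset.mem_image.mpr ⟨(j0, false), Finset.mem_univ _, ?_⟩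
    funext k
    by_cases hk : k = j0
    · subst hk; simp [h]
    · simp [hk, hzero k hk]

lemma twalk_card_le (d r n : ℕ) [NeZero r]
    [DecidablePred (IsTWalk d r n)]
    (inst : Fintype {ω : Fin (n + 1) → Fin d → ZMod r // IsTWalk d r n ω}) :
    Fintype.card {ω : Fin (n + 1) → Fin d → ZMod r // IsTWalk d r n ω} ≤ (2 * d) ^ n := by
  classical
  have hinj : ∃ Φ : {ω : Fin (n + 1) → Fin d → ZMod r // IsTWalk d r n ω} →
      (Fin n → {x // x ∈ stepSet d r}), Function.Injective Φ := by
    refine ⟨fun ω i => ⟨ω.1 i.succ - ω.1 i.castSucc, ?_⟩, ?_⟩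
    · obtain ⟨e, he1, he2⟩ := ω.2.2 i
      rw [he2, add_sub_cancel_left]
      exact mem_stepSet he1
    · intro ω ω' h
      apply Subtype.ext
      have key : ∀ k (hk : k < n + 1), ω.1 ⟨k, hk⟩ = ω'.1 ⟨k, hk⟩ := by
        intro k
        induction k with
        | zero => intro hk; show ω.1 0 = ω'.1 0; rw [ω.2.1, ω'.2.1]
        | succ k ih =>
          intro hk
          have hkn : k < n := by omega
          have hval := congrArg Subtype.val (congrFun h ⟨k, hkn⟩)
          have hsucc : (⟨k, hkn⟩ : Fin n).succ = ⟨k + 1, hk⟩ := rfl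
          have hcast : (⟨k, hkn⟩ : Fin n).castSucc = ⟨k, by omega⟩ := rfl
          simp only [hsucc, hcast] at hval
          have ihc := ih (by omega)
          rw [ihc] at hval
          exact sub_left_inj.mp hval
      funext i
      have := key i.1 i.2
      simpa [Fin.eta] using this
  obtain ⟨Φ, hΦ⟩ := hinj
  calc Fintype.card {ω : Fin (n + 1) → Fin d → ZMod r // IsTWalk d r n ω}
      ≤ Fintype.card (Fin n → {x // x ∈ stepSet d r}) := Fintype.card_le_of_injective Φ hΦ
    _ = (stepSet d r).card ^ n := by simp [Fintype.card_fun, Fintype.card_coe]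
    _ ≤ (2 * d) ^ n := Nat.pow_le_pow_left (stepSet_card d r) n

lemma choose_ceil_ge {m K n : ℕ} (hm : 1 ≤ m) (hn : (2 * K * m + 1) * m ≤ n) :
    K * n ≤ (⌈(n : ℝ) / (m : ℝ)⌉₊).choose 2 := by
  set N := ⌈(n : ℝ) / (m : ℝ)⌉₊ with hN
  have hm0 : (0 : ℝ) < m := by exact_mod_cast hm
  have h1 : n ≤ N * m := by
    have := Nat.le_ceil ((n : ℝ) / (m : ℝ))
    rw [div_le_iff₀ hm0] at this
    exact_mod_cast this
  have h2 : 2 * K * m < N := by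
    rw [hN, Nat.lt_ceil, lt_div_iff₀ hm0]
    have : ((2 * K * m) * m : ℕ) < n := by nlinarith
    exact_mod_cast this
  rw [Nat.choose_two_right]
  have h3 : K * n ≤ K * (N * m) := Nat.mul_le_mul_left _ h1
  have h4 : 2 * (K * (N * m)) ≤ N * (N - 1) := by
    calc 2 * (K * (N * m)) = N * (2 * K * m) := by ring
      _ ≤ N * (N - 1) := Nat.mul_le_mul_left _ (by omega)
  calc K * n ≤ K * (N * m) := h3
    _ = 2 * (K * (N * m)) / 2 := by omega
    _ ≤ N * (N - 1) / 2 := Nat.div_le_div_right h4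

lemma series_summable (m : ℕ) (hm : 1 ≤ m) (c q : ℝ) (hc : 0 ≤ c) (hq0 : 0 ≤ q)
    (hq1 : q < 1) :
    Summable (fun n : ℕ => c ^ n * q ^ (⌈(n : ℝ) / (m : ℝ)⌉₊).choose 2) := by
  obtain ⟨K, hK⟩ : ∃ K : ℕ, c * q ^ K < 1 := by
    rcases eq_or_lt_of_le hc with hc0 | hc0
    · exact ⟨0, by rw [← hc0]; norm_num⟩
    · have := tendsto_pow_atTop_nhds_zero_of_lt_one hq0 hq1
      have h2 := this.eventually (eventually_lt_nhds (show (0:ℝ) < 1 / c by positivity))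
      obtain ⟨K, hK⟩ := h2.exists
      exact ⟨K, by rw [mul_comm]; exact (lt_div_iff₀ hc0).mp hK⟩
  set ρ := c * q ^ K with hρ
  have hρ0 : 0 ≤ ρ := by positivity
  set n0 := (2 * K * m + 1) * m with hn0
  rw [← summable_nat_add_iff n0]
  refine Summable.of_nonneg_of_le (fun n => by positivity)
    (fun n => ?_) (summable_geometric_of_lt_one hρ0 hK)
  have hle : K * (n + n0) ≤ (⌈((n + n0 : ℕ) : ℝ) / (m : ℝ)⌉₊).choose 2 :=
    choose_ceil_ge hm (by omega)
  calc c ^ (n + n0) * q ^ (⌈((n + n0 : ℕ) : ℝ) / (m : ℝ)⌉₊).choose 2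
      ≤ c ^ (n + n0) * q ^ (K * (n + n0)) := by
        apply mul_le_mul_of_nonneg_left (pow_le_pow_of_le_one hq0 hq1.le hle) (by positivity)
    _ = ρ ^ (n + n0) := by rw [hρ, mul_pow, pow_mul]
    _ ≤ ρ ^ n := pow_le_pow_of_le_one hρ0 (by nlinarith [pow_nonneg hq0 K]) (by omega)

/-- Forgetting the endpoint: walks grouped by endpoint are just walks. -/
def walkEquiv (d r : ℕ) :
    (Σ x : Fin d → ZMod r, Σ n : ℕ,
      {ω : Fin (n + 1) → Fin d → ZMod r // IsTWalk d r n ω ∧ ω (Fin.last n) = x})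
    ≃ (Σ n : ℕ, {ω : Fin (n + 1) → Fin d → ZMod r // IsTWalk d r n ω}) where
  toFun p := ⟨p.2.1, p.2.2.1, p.2.2.2.1⟩
  invFun q := ⟨q.2.1 (Fin.last q.1), q.1, q.2.1, q.2.2, rfl⟩
  left_inv := by rintro ⟨x, n, ω, h1, rfl⟩; rfl
  right_inv := by rintro ⟨n, ω, h⟩; rfl

lemma per_n_bound (d r : ℕ) (hr : 1 ≤ r) [NeZero r] {β z : ℝ}
    (hβ0 : 0 < β) (hβ1 : β < 1) (hz : 0 ≤ z) (n : ℕ) :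
    ∑' ω : {ω : Fin (n + 1) → Fin d → ZMod r // IsTWalk d r n ω},
      ENNReal.ofReal (z ^ n * Kint β n ω.1)
    ≤ ENNReal.ofReal ((2 * d * z) ^ n * (1 - β) ^ (pigeonN d r n).choose 2) := by
  classical
  have hrd : (0 : ℝ) < (r : ℝ) ^ d := by positivity
  have hcardV : Fintype.card (Fin d → ZMod r) = r ^ d := by
    simp [ZMod.card]
  have hN : Fintype.card (Fin d → ZMod r) * (pigeonN d r n - 1) < n + 1 := by
    rw [hcardV]
    rcases Nat.eq_zero_or_pos (pigeonN d r n) with h0 | hpos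
    · simp [h0]
    · set M := pigeonN d r n - 1 with hM
      have hlt : M < ⌈(n : ℝ) / ((r : ℝ) ^ d)⌉₊ := by
        have : pigeonN d r n - 1 < pigeonN d r n := Nat.sub_lt hpos one_pos
        simpa [pigeonN, hM] using this
      rw [Nat.lt_ceil, lt_div_iff₀ hrd] at hlt
      have h2 : ((r ^ d * M : ℕ) : ℝ) < (n : ℝ) := by push_cast; linarith
      have h3 : r ^ d * M < n := by exact_mod_cast h2
      omega
  rw [tsum_fintype]
  have hterm : ∀ ω : {ω : Fin (n + 1) → Fin d → ZMod r // IsTWalk d r n ω},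
      ENNReal.ofReal (z ^ n * Kint β n ω.1)
      ≤ ENNReal.ofReal (z ^ n * (1 - β) ^ (pigeonN d r n).choose 2) := fun ω =>
    ENNReal.ofReal_le_ofReal
      (mul_le_mul_of_nonneg_left (Kint_le_pow hβ0.le hβ1 hN ω.1) (pow_nonneg hz n))
  calc (∑ ω : {ω : Fin (n + 1) → Fin d → ZMod r // IsTWalk d r n ω},
        ENNReal.ofReal (z ^ n * Kint β n ω.1))
      ≤ ∑ _ω : {ω : Fin (n + 1) → Fin d → ZMod r // IsTWalk d r n ω},
        ENNReal.ofReal (z ^ n * (1 - β) ^ (pigeonN d r n).choose 2) :=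
        Finset.sum_le_sum fun ω _ => hterm ω
    _ = (Fintype.card {ω : Fin (n + 1) → Fin d → ZMod r // IsTWalk d r n ω} : ℝ≥0∞) *
        ENNReal.ofReal (z ^ n * (1 - β) ^ (pigeonN d r n).choose 2) := by
        rw [Finset.sum_const, Finset.card_univ, nsmul_eq_mul]
    _ ≤ (((2 * d) ^ n : ℕ) : ℝ≥0∞) *
        ENNReal.ofReal (z ^ n * (1 - β) ^ (pigeonN d r n).choose 2) := by
        exact mul_le_mul_left (Nat.cast_le.mpr (twalk_card_le d r n _)) _
    _ = ENNReal.ofReal ((2 * d * z) ^ n * (1 - β) ^ (pigeonN d r n).choose 2) := by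
        rw [← ENNReal.ofReal_natCast, ← ENNReal.ofReal_mul (by positivity)]
        congr 1
        push_cast
        ring

/-- The torus susceptibility of the weakly self-avoiding walk is finite for every
`z ≥ 0`: `χ^𝕋(z) ≤ ∑_n (2dz)^n (1−β)^{N_n(N_n−1)/2} < ∞`, with `N_n = ⌈n/r^d⌉`. -/
theorem wsaw_torus_susceptibility_finite (d : ℕ) (hd : 1 ≤ d) (β : ℝ)
    (hβ : β ∈ Set.Ioo (0:ℝ) 1) (z : ℝ) (hz : 0 ≤ z) (r : ℕ) (hr : 3 ≤ r) :
    (∑' x : Fin d → ZMod r, wsawGT d r β z x)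
        ≤ ∑' n : ℕ, ENNReal.ofReal
            ((2 * d * z) ^ n * (1 - β) ^ (pigeonN d r n).choose 2) ∧
    (∑' n : ℕ, ENNReal.ofReal
        ((2 * d * z) ^ n * (1 - β) ^ (pigeonN d r n).choose 2)) < ⊤ := by
  obtain ⟨hβ0, hβ1⟩ := hβ
  haveI : NeZero r := ⟨by omega⟩
  have hr1 : 1 ≤ r := by omega
  have hm : 1 ≤ r ^ d := Nat.one_le_pow _ _ (by omega)
  constructor
  · calc (∑' x : Fin d → ZMod r, wsawGT d r β z x)
        = ∑' p : (Σ x : Fin d → ZMod r, Σ n : ℕ,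
            {ω : Fin (n + 1) → Fin d → ZMod r // IsTWalk d r n ω ∧ ω (Fin.last n) = x}),
            ENNReal.ofReal (z ^ p.2.1 * Kint β p.2.1 p.2.2.1) :=
          (ENNReal.tsum_sigma _).symm
      _ = ∑' q : (Σ n : ℕ, {ω : Fin (n + 1) → Fin d → ZMod r // IsTWalk d r n ω}),
            ENNReal.ofReal (z ^ q.1 * Kint β q.1 q.2.1) :=
          Equiv.tsum_eq (walkEquiv d r)
            (fun q => ENNReal.ofReal (z ^ q.1 * Kint β q.1 q.2.1))
      _ = ∑' n : ℕ, ∑' ω : {ω : Fin (n + 1) → Fin d → ZMod r // IsTWalk d r n ω},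
            ENNReal.ofReal (z ^ n * Kint β n ω.1) :=
          ENNReal.tsum_sigma (fun n (ω : {ω : Fin (n + 1) → Fin d → ZMod r // IsTWalk d r n ω}) =>
            ENNReal.ofReal (z ^ n * Kint β n ω.1))
      _ ≤ ∑' n : ℕ, ENNReal.ofReal
            ((2 * d * z) ^ n * (1 - β) ^ (pigeonN d r n).choose 2) :=
          ENNReal.tsum_le_tsum fun n => per_n_bound d r hr1 hβ0 hβ1 hz n
  · have hsummable : Summable (fun n : ℕ =>
        (2 * d * z) ^ n * (1 - β) ^ (pigeonN d r n).choose 2) := by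
      have := series_summable (r ^ d) hm (2 * d * z) (1 - β)
        (mul_nonneg (by positivity) hz) (by linarith) (by linarith)
      convert this using 2 with n
      congr 2
      simp [pigeonN, Nat.cast_pow]
    have hnn : ∀ n : ℕ, 0 ≤ (2 * d * z) ^ n * (1 - β) ^ (pigeonN d r n).choose 2 :=
      fun n => mul_nonneg (pow_nonneg (mul_nonneg (by positivity) hz) n)
        (pow_nonneg (by linarith) _)
    rw [← ENNReal.ofReal_tsum_of_nonneg hnn hsummable]
    exact ENNReal.ofReal_lt_top
end

section
/- Suppose f : ℤ^d → ℝ satisfies |f(x)| ≤ c·(1 ∨ |x|)^{−(d−2)} e^{−c'ν|x|} with c, c', ν > 0 and d > 2, and suppose f also satisfies the same bound with |x| replaced by Euclidean distance. Then for any r ≥ 3 and x ∈ [−r/2, r/2)^d ∩ ℤ^d, the wrapped sum satisfies ∑_{u∈ℤ^d, u≠0} |f(x + ru)| ≤ C·r^{−d}·ν^{−2} for a constant C depending only on d, c, c'. -/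
/-- The sup norm of `x : ℤ^d`, as a real number. -/
noncomputable def supNorm {d : ℕ} (x : Fin d → ℤ) : ℝ :=
  ((Finset.univ.sup fun j => (x j).natAbs : ℕ) : ℝ)

/-- The Euclidean norm of `x : ℤ^d`, as a real number. -/
noncomputable def eucNorm {d : ℕ} (x : Fin d → ℤ) : ℝ :=
  Real.sqrt (∑ j, ((x j : ℝ)) ^ 2)

/-!
For `u ≠ 0` and `‖x‖∞ ≤ r / 2` the triangle inequality gives
`|x + r u| ≥ ‖x + r u‖∞ ≥ r ‖u‖∞ / 2`, so with `β = c' ν r / 2`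
`|f (x + r u)| ≤ c (2 / r)^(d-2) ‖u‖∞^(-(d-2)) e^(-β ‖u‖∞)`.
Grouping the `u` into the sup-norm spheres `Finset.box n`, each with at most `2 d (3 n)^(d-1)`
points, bounds the wrapped sum by `2 d 3^(d-1) c (2 / r)^(d-2) ∑_{n ≥ 1} n e^(-β n)`, and
`∑ n e^(-β n) = e^(-β) / (1 - e^(-β))^2 = (2 sinh (β / 2))^(-2) ≤ β^(-2)`.
This discrete shell summation replaces the integral comparison with `∫ |y|^(-(d-2)) e^(-|y|) dy`.
-/

open Finset Real

lemma sum_mul_exp_neg_le {β : ℝ} (hβ : 0 < β) (s : Finset ℕ) :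
    ∑ n ∈ s, n * exp (-(β * n)) ≤ 1 / β ^ 2 := by
  set q := exp (-β)
  have hq : ‖q‖ < 1 := by
    rw [Real.norm_of_nonneg (exp_pos _).le, Real.exp_lt_one_iff]; linarith
  have hterm (n : ℕ) : (n : ℝ) * exp (-(β * n)) = n * q ^ n := by
    rw [← exp_nat_mul]; ring_nf
  have hgap : β * exp (-(β / 2)) ≤ 1 - q := by
    have h := self_le_sinh_iff.mpr (by positivity : 0 ≤ β / 2)
    rw [sinh_eq] at h
    have hsplit : 1 - q = (exp (β / 2) - exp (-(β / 2))) * exp (-(β / 2)) := by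
      rw [sub_mul, ← exp_add, ← exp_add]; ring_nf; simp [q]
    rw [hsplit]
    gcongr
    linarith
  have hsq : β ^ 2 * q ≤ (1 - q) ^ 2 := by
    have hhalf : exp (-(β / 2)) ^ 2 = q := by rw [← exp_nat_mul]; ring_nf; rfl
    calc β ^ 2 * q = (β * exp (-(β / 2))) ^ 2 := by rw [mul_pow, hhalf]
      _ ≤ (1 - q) ^ 2 := pow_le_pow_left₀ (by positivity) hgap 2
  calc ∑ n ∈ s, (n : ℝ) * exp (-(β * n))
        = ∑ n ∈ s, n * q ^ n := sum_congr rfl fun n _ => hterm n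
    _ ≤ q / (1 - q) ^ 2 := sum_le_hasSum s (fun n _ => by positivity)
          (hasSum_coe_mul_geometric_of_norm_lt_one hq)
    _ ≤ 1 / β ^ 2 := by
      have : 0 < 1 - q := by rw [Real.norm_of_nonneg (exp_pos _).le] at hq; linarith
      rw [div_le_div_iff₀ (by positivity) (by positivity)]
      linarith

def natSupNorm {d : ℕ} (u : Fin d → ℤ) : ℕ := univ.sup fun j => (u j).natAbs

section natSupNorm

variable {d : ℕ}

lemma cast_natSupNorm (u : Fin d → ℤ) : (natSupNorm u : ℝ) = ‖u‖ := by
  rw [Pi.norm_def, natSupNorm, ← NNReal.coe_natCast, Nat.cast_finsetSup]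
  simp only [NNReal.natCast_natAbs]

lemma natSupNorm_le_iff {u : Fin d → ℤ} {n : ℕ} :
    natSupNorm u ≤ n ↔ ∀ j, (u j).natAbs ≤ n := by
  simp [natSupNorm, Finset.sup_le_iff]

lemma mem_Icc_neg_natCast_iff {u : Fin d → ℤ} {n : ℕ} :
    u ∈ Icc (-(n : Fin d → ℤ)) n ↔ natSupNorm u ≤ n := by
  simp only [natSupNorm_le_iff, mem_Icc, Pi.le_def, ← forall_and, Pi.neg_apply, Pi.natCast_apply]
  exact forall_congr' fun j => by omega

lemma mem_box_iff_natSupNorm_eq {u : Fin d → ℤ} {n : ℕ} :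
    u ∈ (box n : Finset (Fin d → ℤ)) ↔ natSupNorm u = n := by
  cases n with
  | zero =>
    rw [box_zero, mem_singleton, ← Nat.le_zero, natSupNorm_le_iff, funext_iff]
    simp
  | succ m =>
    rw [box_succ_eq_sdiff, mem_sdiff, mem_Icc_neg_natCast_iff, mem_Icc_neg_natCast_iff]
    omega

lemma card_Icc_neg_natCast (n : ℕ) : #(Icc (-(n : Fin d → ℤ)) n) = (2 * n + 1) ^ d := by
  simp only [Pi.card_Icc, Pi.neg_apply, Pi.natCast_apply, Int.card_Icc, prod_const, card_univ,
    Fintype.card_fin]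
  congr 1
  omega

lemma card_box_le {n : ℕ} (hn : 1 ≤ n) :
    (#(box n : Finset (Fin d → ℤ)) : ℝ) ≤ 2 * d * (3 * n) ^ (d - 1) := by
  obtain ⟨m, rfl⟩ := Nat.exists_eq_add_of_le' hn
  have hsub : Icc (-(m : Fin d → ℤ)) m ⊆ Icc (-((m + 1 : ℕ) : Fin d → ℤ)) (m + 1 : ℕ) :=
    Icc_subset_Icc (by simp) (by simp)
  rw [box_succ_eq_sdiff, card_sdiff_of_subset hsub, card_Icc_neg_natCast, card_Icc_neg_natCast,
    Nat.cast_sub (by gcongr; omega)]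
  push_cast
  calc ((2 * (m + 1) + 1 : ℝ)) ^ d - (2 * m + 1) ^ d
      ≤ |(2 * (m + 1) + 1 : ℝ) - (2 * m + 1)| * d
          * max |(2 * (m + 1) + 1 : ℝ)| |2 * m + 1| ^ (d - 1) :=
        (le_abs_self _).trans (abs_pow_sub_pow_le _ _ _)
    _ ≤ 2 * d * (3 * (m + 1)) ^ (d - 1) := by
      have hmax : max |(2 * (m + 1) + 1 : ℝ)| |2 * m + 1| = 2 * (m + 1) + 1 := by
        rw [abs_of_nonneg (by positivity), abs_of_nonneg (by positivity)]
        exact max_eq_left (by linarith)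
      rw [hmax, show (2 * (m + 1) + 1 : ℝ) - (2 * m + 1) = 2 by ring, abs_two]
      gcongr
      linarith

lemma one_le_natSupNorm {u : Fin d → ℤ} (hu : u ≠ 0) : 1 ≤ natSupNorm u := by
  by_contra! h
  rw [Nat.lt_one_iff, ← mem_box_iff_natSupNorm_eq, box_zero, mem_singleton] at h
  exact hu h

end natSupNorm

lemma sum_le_of_le_decay {d : ℕ} (hd : 2 ≤ d) {A β : ℝ} (hA : 0 ≤ A) (hβ : 0 < β)
    {F : {u : Fin d → ℤ // u ≠ 0} → ℝ}
    (hF : ∀ u, F u ≤ A / ‖(u : Fin d → ℤ)‖ ^ (d - 2) * exp (-(β * ‖(u : Fin d → ℤ)‖)))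
    (t : Finset {u : Fin d → ℤ // u ≠ 0}) :
    ∑ u ∈ t, F u ≤ 2 * d * 3 ^ (d - 1) * A / β ^ 2 := by
  obtain ⟨k, rfl⟩ := Nat.exists_eq_add_of_le' hd
  set g : ℕ → ℝ := fun n => A / n ^ k * exp (-(β * n))
  set N : {u : Fin (k + 2) → ℤ // u ≠ 0} → ℕ := fun u => natSupNorm u.1
  have hshell (n : ℕ) (hn : n ∈ t.image N) :
      #{u ∈ t | N u = n} • g n ≤ 2 * (k + 2) * 3 ^ (k + 1) * A * (n * exp (-(β * n))) := by
    obtain ⟨u, -, rfl⟩ := mem_image.mp hn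
    have hn1 : (1 : ℝ) ≤ N u := by exact_mod_cast one_le_natSupNorm u.2
    have hcard : #{v ∈ t | N v = N u} ≤ #(box (N u) : Finset (Fin (k + 2) → ℤ)) :=
      card_le_card_of_injOn Subtype.val
        (fun v hv => mem_box_iff_natSupNorm_eq.mpr (mem_filter.mp hv).2)
        Subtype.val_injective.injOn
    calc #{v ∈ t | N v = N u} • g (N u)
        ≤ 2 * (k + 2 : ℕ) * (3 * N u) ^ (k + 1) * g (N u) := by
          rw [nsmul_eq_mul]
          gcongr
          exact (Nat.cast_le.mpr hcard).trans (card_box_le (by exact_mod_cast hn1))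
      _ = 2 * (k + 2) * 3 ^ (k + 1) * A * (N u * exp (-(β * N u))) := by
          simp only [g]
          push_cast
          field_simp
          ring
  calc ∑ u ∈ t, F u ≤ ∑ u ∈ t, g (N u) := sum_le_sum fun u _ => by
        simpa only [g, N, cast_natSupNorm, Nat.add_sub_cancel] using hF u
    _ = ∑ n ∈ t.image N, #{u ∈ t | N u = n} • g n := sum_comp g N
    _ ≤ ∑ n ∈ t.image N, 2 * (k + 2) * 3 ^ (k + 1) * A * (n * exp (-(β * n))) :=
        sum_le_sum hshell
    _ ≤ 2 * (k + 2) * 3 ^ (k + 1) * A * (1 / β ^ 2) := by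
        rw [← mul_sum]
        gcongr
        exact sum_mul_exp_neg_le hβ _
    _ = _ := by push_cast; ring

lemma summable_and_tsum_le_of_le_decay {d : ℕ} (hd : 2 ≤ d) {A β : ℝ} (hA : 0 ≤ A)
    (hβ : 0 < β)
    {F : {u : Fin d → ℤ // u ≠ 0} → ℝ} (hF0 : 0 ≤ F)
    (hF : ∀ u, F u ≤ A / ‖(u : Fin d → ℤ)‖ ^ (d - 2) * exp (-(β * ‖(u : Fin d → ℤ)‖))) :
    Summable F ∧ ∑' u, F u ≤ 2 * d * 3 ^ (d - 1) * A / β ^ 2 :=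
  ⟨summable_of_sum_le hF0 (sum_le_of_le_decay hd hA hβ hF),
    Real.tsum_le_of_sum_le hF0 (sum_le_of_le_decay hd hA hβ hF)⟩

lemma half_mul_norm_le_norm_add_smul {R E : Type*} [SeminormedAddGroup R]
    [SeminormedAddCommGroup E] [SMul R E] [NormSMulClass R E] {a : R} {x u : E}
    (hx : ‖x‖ ≤ ‖a‖ / 2) (hu : 1 ≤ ‖u‖) :
    ‖a‖ * ‖u‖ / 2 ≤ ‖x + a • u‖ := by
  have h := norm_sub_norm_le (a • u) (-x)
  rw [norm_smul, norm_neg, sub_neg_eq_add, add_comm] at h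
  nlinarith [norm_nonneg a]

lemma norm_le_eucNorm {d : ℕ} (v : Fin d → ℤ) : ‖v‖ ≤ eucNorm v :=
  (pi_norm_le_iff_of_nonneg (sqrt_nonneg _)).2 fun j => by
    rw [Int.norm_eq_abs]
    exact abs_le_sqrt (single_le_sum (f := fun i => ((v i : ℝ)) ^ 2) (fun i _ => sq_nonneg _)
      (mem_univ j))

lemma norm_le_half_of_forall_neg_le_two_mul_lt {d r : ℕ} {x : Fin d → ℤ}
    (hx : ∀ j, -(r : ℤ) ≤ 2 * x j ∧ 2 * x j < r) : ‖x‖ ≤ r / 2 :=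
  (pi_norm_le_iff_of_nonneg (by positivity)).2 fun j => by
    rw [Int.norm_eq_abs, abs_le]
    obtain ⟨h₁, h₂⟩ := hx j
    constructor
    · have : -(r : ℝ) ≤ 2 * x j := by exact_mod_cast h₁
      linarith
    · have : 2 * (x j : ℝ) < r := by exact_mod_cast h₂
      linarith

lemma abs_apply_add_smul_le {d : ℕ} {c κ : ℝ} (hc : 0 ≤ c) (hκ : 0 ≤ κ)
    {f : (Fin d → ℤ) → ℝ}
    (hf : ∀ x, |f x| ≤ c / (max 1 (eucNorm x)) ^ (d - 2) * exp (-κ * eucNorm x))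
    {r : ℕ} (hr : 0 < r) {x : Fin d → ℤ} (hx : ‖x‖ ≤ r / 2) {u : Fin d → ℤ} (hu : u ≠ 0) :
    |f (x + (r : ℤ) • u)| ≤
      c * (2 / r) ^ (d - 2) / ‖u‖ ^ (d - 2) * exp (-(κ * r / 2 * ‖u‖)) := by
  have hu1 : (1 : ℝ) ≤ ‖u‖ := by
    rw [← cast_natSupNorm]; exact_mod_cast one_le_natSupNorm hu
  have hρ : r * ‖u‖ / 2 ≤ eucNorm (x + (r : ℤ) • u) := by
    have h := half_mul_norm_le_norm_add_smul (a := (r : ℤ)) (by simpa using hx) hu1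
    simp only [Int.norm_natCast] at h
    exact h.trans (norm_le_eucNorm _)
  have hr' : (0 : ℝ) < r := by exact_mod_cast hr
  calc |f (x + (r : ℤ) • u)|
      ≤ c / (max 1 (eucNorm (x + (r : ℤ) • u))) ^ (d - 2)
          * exp (-κ * eucNorm (x + (r : ℤ) • u)) := hf _
    _ ≤ c / (r * ‖u‖ / 2) ^ (d - 2) * exp (-κ * (r * ‖u‖ / 2)) := by
        gcongr ?_ * exp ?_
        · gcongr
          exact hρ.trans (le_max_right _ _)
        · exact mul_le_mul_of_nonpos_left hρ (neg_nonpos.mpr hκ)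
    _ = c * (2 / r) ^ (d - 2) / ‖u‖ ^ (d - 2) * exp (-(κ * r / 2 * ‖u‖)) := by
        rw [show (r : ℝ) * ‖u‖ / 2 = ‖u‖ / (2 / r) by field_simp, div_pow, div_div_eq_mul_div]
        congr 2
        field_simp

/-- If `|f(x)| ≤ c (1 ∨ |x|)^{−(d−2)} e^{−c'ν|x|}` (Euclidean norm) with `d > 2`, then
for `r ≥ 3` and `x ∈ [−r/2, r/2)^d`, the wrapped sum over nonzero `u` satisfies
`∑_{u≠0} |f(x+ru)| ≤ C r^{−d} ν^{−2}`, with `C` depending only on `d, c, c'`. -/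
theorem wrapped_sum_bound (d : ℕ) (hd : 2 < d) (c c' : ℝ) (hc : 0 < c) (hc' : 0 < c') :
    ∃ C : ℝ, ∀ ν : ℝ, 0 < ν → ∀ f : (Fin d → ℤ) → ℝ,
      (∀ x, |f x| ≤ c / (max 1 (eucNorm x)) ^ (d - 2) * Real.exp (-c' * ν * eucNorm x)) →
      ∀ r : ℕ, 3 ≤ r → ∀ x : Fin d → ℤ, (∀ j, -(r : ℤ) ≤ 2 * x j ∧ 2 * x j < r) →
        Summable (fun u : {u : Fin d → ℤ // u ≠ 0} => |f (x + (r : ℤ) • (u : Fin d → ℤ))|) ∧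
        (∑' u : {u : Fin d → ℤ // u ≠ 0}, |f (x + (r : ℤ) • (u : Fin d → ℤ))|)
          ≤ C / ((r : ℝ) ^ d * ν ^ 2) := by
  refine ⟨8 * d * 3 ^ (d - 1) * 2 ^ (d - 2) * c / c' ^ 2, fun ν hν f hf r hr x hx => ?_⟩
  have hr0 : 0 < r := by omega
  obtain ⟨hsum, hle⟩ := summable_and_tsum_le_of_le_decay hd.le (by positivity)
    (by positivity : 0 < c' * ν * r / 2) (fun _ => abs_nonneg _) fun u =>
      abs_apply_add_smul_le hc.le (by positivity) (by simpa only [neg_mul] using hf) hr0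
        (norm_le_half_of_forall_neg_le_two_mul_lt hx) u.2
  refine ⟨hsum, hle.trans_eq ?_⟩
  obtain ⟨k, rfl⟩ := Nat.exists_eq_add_of_le' hd.le
  simp only [Nat.add_sub_cancel, show k + 2 - 1 = k + 1 by omega, div_pow]
  field_simp
  ring
end
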